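/- Let n, a, b be positive integers with a + b < n and b > n/2, and set i₀ := b − 1 − (n−b)(n−b−1)/a (a rational number; note i₀ ≤ 2b−n−1). Then: if i₀ < 0, then |F_0(n,a,b)| > |F_i(n,a,b)| for all 1 ≤ i ≤ 2b−n+1; if i₀ ≥ 0 and i₀ is an integer, then |F_{i₀}(n,a,b)| = |F_{i₀+1}(n,a,b)| > |F_i(n,a,b)| for all i ∈ {0,…,2b−n+1} ∖ {i₀, i₀+1}; and if i₀ ≥ 0 and i₀ is not an integer, then |F_{⌈i₀⌉}(n,a,b)| > |F_i(n,a,b)| for all i ∈ {0,…,2b−n+1} with i ≠ ⌈i₀⌉. -/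

import Mathlib

open Finset

/-- `Iv n` is the set `[n] = {1, …, n}` as a finset of naturals (with `Iv 0 = ∅`). -/
def Iv (n : ℕ) : Finset ℕ := Finset.Icc 1 n

/-- `f` is a flag of the ground set `[n]`: a set of nonempty proper subsets of `[n]`
that is totally ordered by inclusion. -/
def IsFlag (n : ℕ) (f : Finset (Finset ℕ)) : Prop :=
  (∀ A ∈ f, A.Nonempty ∧ A ⊆ Iv n ∧ A ≠ Iv n) ∧
  ∀ A ∈ f, ∀ B ∈ f, A ⊆ B ∨ B ⊆ A

/-- The type of a flag: the set of cardinalities of its members. -/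
def flagType (f : Finset (Finset ℕ)) : Finset ℕ := f.image Finset.card

/-- The vertices of `Γ(n, T)`: flags of `[n]` of type `T`. -/
def FlagV (n : ℕ) (T : Finset ℕ) : Type :=
  {f : Finset (Finset ℕ) // IsFlag n f ∧ flagType f = T}

/-- Two flags of `[n]` are in general position. -/
def GenPos (n : ℕ) (f g : Finset (Finset ℕ)) : Prop :=
  ∀ A ∈ f, ∀ B ∈ g, A ∩ B = ∅ ∨ A ∪ B = Iv n

/-- The graph `Γ(n, T)` on the flags of `[n]` of type `T`, two distinct flags being
adjacent iff they are in general position. -/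
def flagGraph (n : ℕ) (T : Finset ℕ) : SimpleGraph (FlagV n T) where
  Adj f g := f ≠ g ∧ GenPos n f.1 g.1
  symm := ⟨by
    rintro f g ⟨hne, h⟩
    refine ⟨hne.symm, fun A hA B hB => ?_⟩
    rcases h B hB A hA with h' | h'
    · exact Or.inl (by rwa [Finset.inter_comm])
    · exact Or.inr (by rwa [Finset.union_comm])⟩
  loopless := ⟨fun f h => h.1 rfl⟩

/-- A set of vertices is independent: pairwise nonadjacent. -/
def IsIndep {V : Type*} (G : SimpleGraph V) (s : Set V) : Prop :=
  ∀ ⦃u⦄, u ∈ s → ∀ ⦃v⦄, v ∈ s → ¬ G.Adj u v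

/-- A maximal independent set: independent, and no vertex can be added to it
keeping it independent. -/
def IsMaxIndep {V : Type*} (G : SimpleGraph V) (s : Set V) : Prop :=
  IsIndep G s ∧ ∀ v ∉ s, ¬ IsIndep G (insert v s)

/-- The independence number of a graph: the largest cardinality of an independent set. -/
noncomputable def indepNum {V : Type*} (G : SimpleGraph V) : ℕ :=
  sSup {k | ∃ s : Set V, IsIndep G s ∧ s.ncard = k}

/-- Two sets of vertices are equivalent when some automorphism of the graph maps
one onto the other. -/
def EquivIndep {V : Type*} (G : SimpleGraph V) (s t : Set V) : Prop :=
  ∃ φ : G ≃g G, ⇑φ '' s = t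

/-- The projection of a flag to the sub-type `S`: keep only the members whose
cardinality lies in `S`. -/
def projFlag (S : Finset ℕ) (f : Finset (Finset ℕ)) : Finset (Finset ℕ) :=
  f.filter (fun A => A.card ∈ S)

/-- Condition (I) of Example 3.1: `[i] ⊆ B ⊆ [n-1]`. -/
def condI (n i : ℕ) (B : Finset ℕ) : Prop := Iv i ⊆ B ∧ B ⊆ Iv (n - 1)

/-- Condition (II) of Example 3.1: `min A ≤ i` and `[min A] ⊆ B`. -/
def condII (i : ℕ) (A B : Finset ℕ) : Prop :=
  ∃ j ∈ A, (∀ k ∈ A, j ≤ k) ∧ j ≤ i ∧ Iv j ⊆ B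

/-- The set `F_i(n,a,b)` of flags `(A,B)` of `[n]` of type `{a,b}` satisfying
condition (I) or condition (II). -/
def Fi (n a b i : ℕ) : Set (FlagV n {a, b}) :=
  {f | ∃ A B : Finset ℕ, A ∈ f.1 ∧ B ∈ f.1 ∧ A.card = a ∧ B.card = b ∧
        (condI n i B ∨ condII i A B)}

/-- The set `bar F_i(n,a,b)` for `i = 2b-n+1`: flags `(A,B)` of type `{a,b}` with
`[i] ⊆ B` or condition (II). -/
def FiBar (n a b : ℕ) : Set (FlagV n {a, b}) :=
  {f | ∃ A B : Finset ℕ, A ∈ f.1 ∧ B ∈ f.1 ∧ A.card = a ∧ B.card = b ∧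
        (Iv (2 * b - n + 1) ⊆ B ∨ condII (2 * b - n + 1) A B)}

/-- The rational number `i₀ = b - 1 - (n-b)(n-b-1)/a`. -/
def izero (n a b : ℕ) : ℚ :=
  (b : ℚ) - 1 - ((n : ℚ) - b) * ((n : ℚ) - b - 1) / a

/-- The index `i = max{0, ⌈i₀⌉}`. -/
def iDef (n a b : ℕ) : ℕ := (max 0 ⌈izero n a b⌉).toNat

/-- `f(n,a,b)`: the largest cardinality of the sets `F_j(n,a,b)`, `0 ≤ j ≤ 2b-n+1`. -/
noncomputable def fMax (n a b : ℕ) : ℕ :=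
  (Finset.range (2 * b - n + 2)).sup (fun j => (Fi n a b j).ncard)

/-- An independent set of `Γ(n,{a,b})` is of standard type if it has cardinality
`f(n,a,b)` and some automorphism of the graph maps it onto one of the sets of
Example 3.1. -/
noncomputable def IsStandardType (n a b : ℕ) (F : Set (FlagV n {a, b})) : Prop :=
  F.ncard = fMax n a b ∧
  ∃ φ : flagGraph n {a, b} ≃g flagGraph n {a, b},
    (∃ j ≤ 2 * b - n + 1, ⇑φ '' F = Fi n a b j) ∨ ⇑φ '' F = FiBar n a b
open scoped Classical in
/-- Pairs (A,B) representing flags in `F_i(n,a,b)`. -/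
noncomputable def PiFin (n a b i : ℕ) : Finset (Finset ℕ × Finset ℕ) :=
  ((Iv n).powerset ×ˢ (Iv n).powerset).filter
    (fun p => p.1 ⊆ p.2 ∧ p.1.card = a ∧ p.2.card = b ∧
       (condI n i p.2 ∨ condII i p.1 p.2))

lemma mem_PiFin {n a b i : ℕ} {p : Finset ℕ × Finset ℕ} :
    p ∈ PiFin n a b i ↔ p.2 ⊆ Iv n ∧ p.1 ⊆ p.2 ∧ p.1.card = a ∧ p.2.card = b ∧
      (condI n i p.2 ∨ condII i p.1 p.2) := by
  classical
  simp only [PiFin, Finset.mem_filter, Finset.mem_product, Finset.mem_powerset]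
  constructor
  · rintro ⟨⟨h1, h2⟩, h⟩; exact ⟨h2, h⟩
  · rintro ⟨h2, hAB, h⟩; exact ⟨⟨hAB.trans h2, h2⟩, hAB, h⟩

/-- structure of a flag of type {a,b} with a < b -/
lemma flag_struct {n a b : ℕ} (hab : a < b) (f : FlagV n {a, b}) :
    ∃ A B : Finset ℕ, f.1 = {A, B} ∧ A ⊆ B ∧ A.card = a ∧ B.card = b := by
  obtain ⟨⟨hmem, hchain⟩, htype⟩ := f.2
  have hA : ∃ A ∈ f.1, A.card = a := by
    have : a ∈ flagType f.1 := by rw [htype]; simp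
    simpa [flagType, Finset.mem_image] using this
  have hB : ∃ B ∈ f.1, B.card = b := by
    have : b ∈ flagType f.1 := by rw [htype]; simp
    simpa [flagType, Finset.mem_image] using this
  obtain ⟨A, hAf, hAc⟩ := hA
  obtain ⟨B, hBf, hBc⟩ := hB
  refine ⟨A, B, ?_, ?_, hAc, hBc⟩
  · apply Finset.Subset.antisymm
    · intro C hCf
      have : C.card ∈ flagType f.1 := Finset.mem_image_of_mem _ hCf
      rw [htype] at this
      simp only [Finset.mem_insert, Finset.mem_singleton] at this ⊢
      rcases this with hc | hc
      · left
        rcases hchain C hCf A hAf with h | h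
        · exact Finset.eq_of_subset_of_card_le h (by omega)
        · exact (Finset.eq_of_subset_of_card_le h (by omega)).symm
      · right
        rcases hchain C hCf B hBf with h | h
        · exact Finset.eq_of_subset_of_card_le h (by omega)
        · exact (Finset.eq_of_subset_of_card_le h (by omega)).symm
    · intro C hC
      simp only [Finset.mem_insert, Finset.mem_singleton] at hC
      rcases hC with rfl | rfl <;> assumption
  · rcases hchain A hAf B hBf with h | h
    · exact h
    · exact absurd (Finset.card_le_card h) (by omega)

open scoped Classical in
/-- extraction map -/
noncomputable def gmap {n : ℕ} {T : Finset ℕ} (a : ℕ) (f : FlagV n T) :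
    Finset ℕ × Finset ℕ :=
  (f.1.sup (fun X => if X.card = a then X else ∅), f.1.sup id)

lemma gmap_eq {n a b : ℕ} (hab : a < b) (f : FlagV n {a, b})
    {A B : Finset ℕ} (hf : f.1 = {A, B}) (hAB : A ⊆ B)
    (hAc : A.card = a) (hBc : B.card = b) :
    gmap a f = (A, B) := by
  classical
  simp only [gmap, hf]
  rw [Finset.sup_insert, Finset.sup_singleton, Finset.sup_insert, Finset.sup_singleton]
  simp only [id]
  rw [Prod.mk.injEq]
  constructor
  · rw [if_pos hAc, if_neg (by omega)]
    simp
  · exact sup_eq_right.mpr hAB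

lemma ncard_Fi {n a b : ℕ} (ha : 0 < a) (hab : a < b) (hbn : b < n) (i : ℕ) :
    (Fi n a b i).ncard = (PiFin n a b i).card := by
  classical
  have himg : (gmap a) '' (Fi n a b i) = ↑(PiFin n a b i) := by
    ext p
    simp only [Set.mem_image, Finset.coe_sort_coe, Finset.mem_coe]
    constructor
    · rintro ⟨f, hf, rfl⟩
      obtain ⟨A, B, hfAB, hABsub, hAc, hBc⟩ := flag_struct hab f
      obtain ⟨A', B', hA'f, hB'f, hA'c, hB'c, hcond⟩ := hf
      have hA' : A' = A := by
        rw [hfAB] at hA'f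
        simp only [Finset.mem_insert, Finset.mem_singleton] at hA'f
        rcases hA'f with rfl | rfl
        · rfl
        · exact absurd (hA'c.symm.trans hBc) (by omega)
      have hB' : B' = B := by
        rw [hfAB] at hB'f
        simp only [Finset.mem_insert, Finset.mem_singleton] at hB'f
        rcases hB'f with rfl | rfl
        · exact absurd (hB'c.symm.trans hAc) (by omega)
        · rfl
      subst hA'; subst hB'
      rw [gmap_eq hab f hfAB hABsub hAc hBc]
      rw [mem_PiFin]
      have hBmem : B' ∈ f.1 := by rw [hfAB]; simp
      exact ⟨(f.2.1.1 B' hBmem).2.1, hABsub, hAc, hBc, hcond⟩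
    · intro hp
      rw [mem_PiFin] at hp
      obtain ⟨hBIv, hAB, hAc, hBc, hcond⟩ := hp
      have hne : p.1 ≠ p.2 := fun h => by rw [h] at hAc; omega
      have hflag : IsFlag n {p.1, p.2} ∧ flagType {p.1, p.2} = {a, b} := by
        constructor
        · constructor
          · intro C hC
            simp only [Finset.mem_insert, Finset.mem_singleton] at hC
            rcases hC with rfl | rfl
            · refine ⟨Finset.card_pos.mp (by omega), hAB.trans hBIv, fun h => ?_⟩
              rw [h, Iv, Nat.card_Icc] at hAc; omega
            · refine ⟨Finset.card_pos.mp (by omega), hBIv, fun h => ?_⟩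
              rw [h, Iv, Nat.card_Icc] at hBc; omega
          · intro C hC D hD
            simp only [Finset.mem_insert, Finset.mem_singleton] at hC hD
            rcases hC with rfl | rfl <;> rcases hD with rfl | rfl <;>
              simp [hAB]
        · rw [flagType, Finset.image_insert, Finset.image_singleton, hAc, hBc]
      refine ⟨⟨{p.1, p.2}, hflag⟩, ⟨p.1, p.2, by simp, by simp, hAc, hBc, hcond⟩, ?_⟩
      exact gmap_eq hab _ rfl hAB hAc hBc
  have hinj : Set.InjOn (gmap a) (Fi n a b i) := by
    intro f hf f' hf' he
    obtain ⟨A, B, h1, h2, h3, h4⟩ := flag_struct hab f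
    obtain ⟨A', B', h1', h2', h3', h4'⟩ := flag_struct hab f'
    rw [gmap_eq hab f h1 h2 h3 h4, gmap_eq hab f' h1' h2' h3' h4', Prod.mk.injEq] at he
    apply Subtype.ext
    rw [h1, h1', he.1, he.2]
  rw [← Set.ncard_coe_finset, ← himg, Set.ncard_image_of_injOn hinj]
lemma mem_Iv {x n : ℕ} : x ∈ Iv n ↔ 1 ≤ x ∧ x ≤ n := by simp [Iv]

lemma card_Iv (n : ℕ) : (Iv n).card = n := by simp [Iv]

lemma Iv_subset_Iv {i j : ℕ} (h : i ≤ j) : Iv i ⊆ Iv j := by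
  intro x hx; rw [mem_Iv] at *; omega

lemma condII_mono {i j : ℕ} {A B : Finset ℕ} (h : i ≤ j) (hc : condII i A B) :
    condII j A B := by
  obtain ⟨k, h1, h2, h3, h4⟩ := hc
  exact ⟨k, h1, h2, h3.trans h, h4⟩

open scoped Classical in
noncomputable def D1 (n a b i : ℕ) : Finset (Finset ℕ × Finset ℕ) :=
  ((Iv n).powerset ×ˢ (Iv n).powerset).filter
    (fun p => p.1 ⊆ p.2 ∧ p.1.card = a ∧ p.2.card = b ∧
      Iv i ⊆ p.2 ∧ p.2 ⊆ Iv (n-1) ∧ (i+1) ∉ p.2 ∧ p.1 ∩ Iv (i+1) = ∅)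

open scoped Classical in
noncomputable def D2 (n a b i : ℕ) : Finset (Finset ℕ × Finset ℕ) :=
  ((Iv n).powerset ×ˢ (Iv n).powerset).filter
    (fun p => p.1 ⊆ p.2 ∧ p.1.card = a ∧ p.2.card = b ∧
      Iv (i+1) ⊆ p.2 ∧ n ∈ p.2 ∧ (i+1) ∈ p.1 ∧ p.1 ∩ Iv i = ∅)

lemma sdiff_eq_D1 {n a b : ℕ} (ha : 0 < a) (hn : 1 ≤ n) (i : ℕ) :
    PiFin n a b i \ PiFin n a b (i+1) = D1 n a b i := by
  classical
  ext p
  obtain ⟨A, B⟩ := p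
  simp only [Finset.mem_sdiff, mem_PiFin, D1, Finset.mem_filter, Finset.mem_product,
    Finset.mem_powerset]
  constructor
  · rintro ⟨⟨hBIv, hAB, hAc, hBc, hcond⟩, hnot⟩
    have hnI : ¬ condI n (i+1) B := fun h => hnot ⟨hBIv, hAB, hAc, hBc, Or.inl h⟩
    have hnII : ¬ condII (i+1) A B := fun h => hnot ⟨hBIv, hAB, hAc, hBc, Or.inr h⟩
    have hnII' : ¬ condII i A B := fun h => hnII (condII_mono (Nat.le_succ i) h)
    have hI : condI n i B := hcond.resolve_right hnII'
    obtain ⟨hIvi, hBn1⟩ := hI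
    have hi1B : (i+1) ∉ B := by
      intro hmem
      apply hnI
      refine ⟨?_, hBn1⟩
      intro x hx
      rw [mem_Iv] at hx
      rcases Nat.lt_or_ge x (i+1) with h | h
      · exact hIvi (mem_Iv.mpr ⟨hx.1, by omega⟩)
      · have : x = i + 1 := by omega
        rwa [this]
    refine ⟨⟨hAB.trans hBIv, hBIv⟩, hAB, hAc, hBc, hIvi, hBn1, hi1B, ?_⟩
    -- A ∩ Iv (i+1) = ∅
    rw [Finset.eq_empty_iff_forall_notMem]
    rintro x hx
    rw [Finset.mem_inter, mem_Iv] at hx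
    obtain ⟨hxA, hx1, hxi⟩ := hx
    -- consider the min of A
    have hAne : A.Nonempty := Finset.card_pos.mp (by omega)
    set j := A.min' hAne with hj
    have hjA : j ∈ A := A.min'_mem hAne
    have hjmin : ∀ k ∈ A, j ≤ k := fun k hk => A.min'_le k hk
    have hjle : j ≤ i + 1 := le_trans (hjmin x hxA) hxi
    rcases Nat.lt_or_ge j (i+1) with h | h
    · exact hnII' ⟨j, hjA, hjmin, by omega, (Iv_subset_Iv (by omega)).trans hIvi⟩
    · have : j = i + 1 := by omega
      exact hi1B (hAB (this ▸ hjA))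
  · rintro ⟨⟨hAIv, hBIv⟩, hAB, hAc, hBc, hIvi, hBn1, hi1B, hAint⟩
    constructor
    · exact ⟨hBIv, hAB, hAc, hBc, Or.inl ⟨hIvi, hBn1⟩⟩
    · rintro ⟨-, -, -, -, (⟨h1, h2⟩ | ⟨j, hjA, hjmin, hji, hIvj⟩)⟩
      · exact hi1B (h1 (mem_Iv.mpr ⟨by omega, le_refl _⟩))
      · have hj1 : 1 ≤ j := (mem_Iv.mp (hAIv hjA)).1
        have : j ∈ A ∩ Iv (i+1) := Finset.mem_inter.mpr ⟨hjA, mem_Iv.mpr ⟨hj1, hji⟩⟩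
        rw [hAint] at this
        exact absurd this (Finset.notMem_empty j)

lemma sdiff_eq_D2 {n a b : ℕ} (ha : 0 < a) (hn : 1 ≤ n) (i : ℕ) :
    PiFin n a b (i+1) \ PiFin n a b i = D2 n a b i := by
  classical
  ext p
  obtain ⟨A, B⟩ := p
  simp only [Finset.mem_sdiff, mem_PiFin, D2, Finset.mem_filter, Finset.mem_product,
    Finset.mem_powerset]
  constructor
  · rintro ⟨⟨hBIv, hAB, hAc, hBc, hcond⟩, hnot⟩
    have hnI : ¬ condI n i B := fun h => hnot ⟨hBIv, hAB, hAc, hBc, Or.inl h⟩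
    have hnII : ¬ condII i A B := fun h => hnot ⟨hBIv, hAB, hAc, hBc, Or.inr h⟩
    have hII : condII (i+1) A B := by
      rcases hcond with h | h
      · exact absurd ⟨(Iv_subset_Iv (Nat.le_succ i)).trans h.1, h.2⟩ hnI
      · exact h
    obtain ⟨j, hjA, hjmin, hji, hIvj⟩ := hII
    have hjeq : j = i + 1 := by
      rcases Nat.lt_or_ge j (i+1) with h | h
      · exact absurd ⟨j, hjA, hjmin, by omega, hIvj⟩ hnII
      · omega
    subst hjeq
    have hIvi1 : Iv (i+1) ⊆ B := hIvj
    have hnB : n ∈ B := by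
      by_contra hnB
      apply hnI
      refine ⟨(Iv_subset_Iv (Nat.le_succ i)).trans hIvi1, fun x hx => ?_⟩
      have hx' := mem_Iv.mp (hBIv hx)
      rw [mem_Iv]
      have : x ≠ n := fun h => hnB (h ▸ hx)
      omega
    refine ⟨⟨hAB.trans hBIv, hBIv⟩, hAB, hAc, hBc, hIvi1, hnB, hjA, ?_⟩
    rw [Finset.eq_empty_iff_forall_notMem]
    rintro x hx
    rw [Finset.mem_inter, mem_Iv] at hx
    have := hjmin x hx.1
    omega
  · rintro ⟨⟨hAIv, hBIv⟩, hAB, hAc, hBc, hIvi1, hnB, hi1A, hAint⟩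
    have hjmin : ∀ k ∈ A, i + 1 ≤ k := by
      intro k hk
      have h1 := (mem_Iv.mp (hAIv hk)).1
      by_contra h
      have : k ∈ A ∩ Iv i := Finset.mem_inter.mpr ⟨hk, mem_Iv.mpr ⟨h1, by omega⟩⟩
      rw [hAint] at this
      exact absurd this (Finset.notMem_empty k)
    constructor
    · exact ⟨hBIv, hAB, hAc, hBc, Or.inr ⟨i+1, hi1A, hjmin, le_refl _, hIvi1⟩⟩
    · rintro ⟨-, -, -, -, (⟨h1, h2⟩ | ⟨j, hjA, hjmin', hji, hIvj⟩)⟩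
      · have := mem_Iv.mp (h2 hnB)
        omega
      · have := hjmin j hjA
        omega
open scoped Classical in
lemma card_sandwich (b' : ℕ) (E S : Finset ℕ) (hd : Disjoint E S) :
    (((E ∪ S).powerset).filter (fun B => E ⊆ B ∧ B.card = E.card + b')).card
      = S.card.choose b' := by
  classical
  rw [← Finset.card_powersetCard]
  apply Finset.card_bij (fun B _ => B \ E)
  · intro B hB
    simp only [Finset.mem_filter, Finset.mem_powerset] at hB
    obtain ⟨hBU, hEB, hBc⟩ := hB
    rw [Finset.mem_powersetCard]
    constructor
    · intro x hx
      rw [Finset.mem_sdiff] at hx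
      rcases Finset.mem_union.mp (hBU hx.1) with h | h
      · exact absurd h hx.2
      · exact h
    · rw [Finset.card_sdiff_of_subset hEB, hBc]; omega
  · intro B hB B' hB' h
    simp only [Finset.mem_filter, Finset.mem_powerset] at hB hB'
    have : B = (B \ E) ∪ E := by
      rw [Finset.sdiff_union_self_eq_union, Finset.union_eq_left.mpr hB.2.1]
    have h' : B' = (B' \ E) ∪ E := by
      rw [Finset.sdiff_union_self_eq_union, Finset.union_eq_left.mpr hB'.2.1]
    rw [this, h', h]
  · intro C hC
    rw [Finset.mem_powersetCard] at hC
    refine ⟨C ∪ E, ?_, ?_⟩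
    · simp only [Finset.mem_filter, Finset.mem_powerset]
      refine ⟨Finset.union_subset (hC.1.trans Finset.subset_union_right)
        Finset.subset_union_left, Finset.subset_union_right, ?_⟩
      rw [Finset.card_union_of_disjoint (hd.symm.mono_left hC.1), hC.2]
      omega
    · rw [Finset.union_sdiff_right, Finset.sdiff_eq_self_iff_disjoint.mpr
        (hd.symm.mono_left hC.1)]
lemma card_D1 {n a b i : ℕ} (ha : 0 < a) (hab : a + b < n) (hbn : n < 2*b)
    (hi : i ≤ 2*b - n) :
    (D1 n a b i).card = (n-i-2).choose (b-i) * (b-i).choose a := by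
  classical
  have hbln : b < n := by omega
  have hib : i + 1 ≤ b := by omega
  set E := Iv i with hE
  set S := Finset.Icc (i+2) (n-1) with hS
  set B1 := ((E ∪ S).powerset).filter (fun B => E ⊆ B ∧ B.card = E.card + (b-i))
    with hB1
  have hdis : Disjoint E S := by
    rw [Finset.disjoint_left]
    intro x hx hx'
    rw [hE, mem_Iv] at hx
    rw [hS, Finset.mem_Icc] at hx'
    omega
  have hD1 : D1 n a b i
      = B1.biUnion (fun B => (Finset.powersetCard a (B \ E)).image (fun A => (A, B))) := by
    ext p
    obtain ⟨A, B⟩ := p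
    simp only [D1, Finset.mem_filter, Finset.mem_product, Finset.mem_powerset,
      Finset.mem_biUnion, Finset.mem_image, Finset.mem_powersetCard, hB1]
    constructor
    · rintro ⟨⟨hAIv, hBIv⟩, hAB, hAc, hBc, hIvi, hBn1, hi1B, hAint⟩
      refine ⟨B, ⟨?_, hIvi, ?_⟩, A, ⟨?_, hAc⟩, rfl⟩
      · intro x hx
        have h1 := mem_Iv.mp (hBn1 hx)
        have h2 : x ≠ i + 1 := fun h => hi1B (h ▸ hx)
        rw [Finset.mem_union, hE, mem_Iv, hS, Finset.mem_Icc]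
        omega
      · rw [hE, card_Iv]; omega
      · intro x hx
        rw [Finset.mem_sdiff, hE, mem_Iv]
        refine ⟨hAB hx, fun hx' => ?_⟩
        have : x ∈ A ∩ Iv (i+1) := Finset.mem_inter.mpr ⟨hx, mem_Iv.mpr ⟨hx'.1, by omega⟩⟩
        rw [hAint] at this
        exact absurd this (Finset.notMem_empty x)
    · rintro ⟨B, ⟨hBsub, hEB, hBc⟩, A, ⟨hAsub, hAc⟩, he⟩
      injection he with he1 he2
      subst he1; subst he2
      have hBc' : B.card = b := by rw [hBc, hE, card_Iv]; omega
      have hBIv : ∀ x ∈ B, 1 ≤ x ∧ x ≤ n - 1 ∧ x ≠ i + 1 := by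
        intro x hx
        rcases Finset.mem_union.mp (hBsub hx) with h | h
        · rw [hE, mem_Iv] at h; omega
        · rw [hS, Finset.mem_Icc] at h; omega
      have hAB : A ⊆ B := hAsub.trans Finset.sdiff_subset
      refine ⟨⟨fun x hx => ?_, fun x hx => ?_⟩, hAB, hAc, hBc', hEB, fun x hx => ?_,
        fun h => ?_, ?_⟩
      · have := hBIv x (hAB hx); rw [mem_Iv]; omega
      · have := hBIv x hx; rw [mem_Iv]; omega
      · have := hBIv x hx; rw [mem_Iv]; omega
      · exact (hBIv _ h).2.2 rfl
      · rw [Finset.eq_empty_iff_forall_notMem]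
        intro x hx
        rw [Finset.mem_inter, mem_Iv] at hx
        obtain ⟨hxA, hx1, hxi⟩ := hx
        have h2 := Finset.mem_sdiff.mp (hAsub hxA)
        rcases Finset.mem_union.mp (hBsub h2.1) with h | h
        · exact h2.2 h
        · rw [hS, Finset.mem_Icc] at h; omega
  rw [hD1, Finset.card_biUnion]
  · have hconst : ∀ B ∈ B1,
        ((Finset.powersetCard a (B \ E)).image (fun A => (A, B))).card
          = (b-i).choose a := by
      intro B hB
      simp only [hB1, Finset.mem_filter, Finset.mem_powerset] at hB
      rw [Finset.card_image_of_injective _ (fun A A' h => (Prod.mk.injEq .. ▸ h).1),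
        Finset.card_powersetCard, Finset.card_sdiff_of_subset hB.2.1, hB.2.2]
      congr 1
      rw [hE, card_Iv]
      omega
    rw [Finset.sum_congr rfl hconst, Finset.sum_const, smul_eq_mul]
    congr 1
    rw [hB1, card_sandwich _ _ _ hdis, hS, Nat.card_Icc]
    congr 1
    omega
  · intro B hB B' hB' hne
    rw [Function.onFun, Finset.disjoint_left]
    rintro p hp hp'
    simp only [Finset.mem_image] at hp hp'
    obtain ⟨A, -, rfl⟩ := hp
    obtain ⟨A', -, he⟩ := hp'
    exact hne ((Prod.mk.injEq .. ▸ he).2.symm ▸ rfl)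
lemma card_D2 {n a b i : ℕ} (ha : 0 < a) (hab : a + b < n) (hbn : n < 2*b)
    (hi : i ≤ 2*b - n) :
    (D2 n a b i).card = (n-i-2).choose (b-i-2) * (b-i-1).choose (a-1) := by
  classical
  have hbln : b < n := by omega
  have hib : i + 2 ≤ b := by omega
  have hin : i + 2 ≤ n := by omega
  set E := insert n (Iv (i+1)) with hE
  set S := Finset.Icc (i+2) (n-1) with hS
  have hcardE : E.card = i + 2 := by
    rw [hE, Finset.card_insert_of_notMem (fun h => by rw [mem_Iv] at h; omega), card_Iv]
  set B2 := ((E ∪ S).powerset).filter (fun B => E ⊆ B ∧ B.card = E.card + (b-i-2))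
    with hB2
  have hdis : Disjoint E S := by
    rw [Finset.disjoint_left]
    intro x hx hx'
    rw [hS, Finset.mem_Icc] at hx'
    rw [hE, Finset.mem_insert, mem_Iv] at hx
    omega
  have hD2 : D2 n a b i
      = B2.biUnion (fun B => (Finset.powersetCard (a-1) (B \ Iv (i+1))).image
          (fun A' => (insert (i+1) A', B))) := by
    ext p
    obtain ⟨A, B⟩ := p
    simp only [D2, Finset.mem_filter, Finset.mem_product, Finset.mem_powerset,
      Finset.mem_biUnion, Finset.mem_image, Finset.mem_powersetCard, hB2]
    constructor
    · rintro ⟨⟨hAIv, hBIv⟩, hAB, hAc, hBc, hIvi, hnB, hi1A, hAint⟩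
      refine ⟨B, ⟨?_, ?_, ?_⟩, A.erase (i+1), ⟨?_, ?_⟩, ?_⟩
      · intro x hx
        have h1 := mem_Iv.mp (hBIv hx)
        rw [Finset.mem_union, hE, Finset.mem_insert, mem_Iv, hS, Finset.mem_Icc]
        omega
      · rw [hE, Finset.insert_subset_iff]
        exact ⟨hnB, hIvi⟩
      · rw [hcardE]; omega
      · intro x hx
        rw [Finset.mem_erase] at hx
        rw [Finset.mem_sdiff, mem_Iv]
        refine ⟨hAB hx.2, fun hx' => ?_⟩
        have : x ∈ A ∩ Iv i := Finset.mem_inter.mpr ⟨hx.2, mem_Iv.mpr ⟨hx'.1, by omega⟩⟩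
        rw [hAint] at this
        exact absurd this (Finset.notMem_empty x)
      · rw [Finset.card_erase_of_mem hi1A, hAc]
      · rw [Finset.insert_erase hi1A]
    · rintro ⟨B, ⟨hBsub, hEB, hBc⟩, A', ⟨hAsub, hAc⟩, he⟩
      injection he with he1 he2
      subst he1; subst he2
      have hi1A' : (i+1) ∉ A' := by
        intro h
        have := Finset.mem_sdiff.mp (hAsub h)
        exact this.2 (mem_Iv.mpr ⟨by omega, le_refl _⟩)
      have hBc' : B.card = b := by rw [hBc, hcardE]; omega
      have hIvB : Iv (i+1) ⊆ B := (Finset.subset_insert _ _).trans hEB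
      have hnB : n ∈ B := hEB (Finset.mem_insert_self _ _)
      have hBIv : B ⊆ Iv n := by
        intro x hx
        rcases Finset.mem_union.mp (hBsub hx) with h | h
        · rw [hE, Finset.mem_insert, mem_Iv] at h
          rw [mem_Iv]; omega
        · rw [hS, Finset.mem_Icc] at h
          rw [mem_Iv]; omega
      have hAB : insert (i+1) A' ⊆ B := by
        rw [Finset.insert_subset_iff]
        exact ⟨hIvB (mem_Iv.mpr ⟨by omega, le_refl _⟩), hAsub.trans Finset.sdiff_subset⟩
      refine ⟨⟨hAB.trans hBIv, hBIv⟩, hAB, ?_, hBc', hIvB, hnB,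
        Finset.mem_insert_self _ _, ?_⟩
      · rw [Finset.card_insert_of_notMem hi1A', hAc]; omega
      · rw [Finset.eq_empty_iff_forall_notMem]
        intro x hx
        rw [Finset.mem_inter, Finset.mem_insert, mem_Iv] at hx
        obtain ⟨hxA, hx1, hxi⟩ := hx
        rcases hxA with rfl | hxA
        · omega
        · have := Finset.mem_sdiff.mp (hAsub hxA)
          exact this.2 (mem_Iv.mpr ⟨hx1, by omega⟩)
  rw [hD2, Finset.card_biUnion]
  · have hconst : ∀ B ∈ B2,
        ((Finset.powersetCard (a-1) (B \ Iv (i+1))).image (fun A' => (insert (i+1) A', B))).card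
          = (b-i-1).choose (a-1) := by
      intro B hB
      simp only [hB2, Finset.mem_filter, Finset.mem_powerset] at hB
      have hIvB : Iv (i+1) ⊆ B := (Finset.subset_insert _ _).trans hB.2.1
      rw [Finset.card_image_of_injOn, Finset.card_powersetCard,
        Finset.card_sdiff_of_subset hIvB, card_Iv, hB.2.2, hcardE]
      · congr 1
        omega
      · intro A1 h1 A2 h2 he
        rw [Finset.mem_coe, Finset.mem_powersetCard] at h1 h2
        have hn1 : (i+1) ∉ A1 := fun h =>
          (Finset.mem_sdiff.mp (h1.1 h)).2 (mem_Iv.mpr ⟨by omega, le_refl _⟩)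
        have hn2 : (i+1) ∉ A2 := fun h =>
          (Finset.mem_sdiff.mp (h2.1 h)).2 (mem_Iv.mpr ⟨by omega, le_refl _⟩)
        injection he with he1 he2
        rw [← Finset.erase_insert hn1, ← Finset.erase_insert hn2, he1]
    rw [Finset.sum_congr rfl hconst, Finset.sum_const, smul_eq_mul]
    congr 1
    rw [hB2, card_sandwich _ _ _ hdis, hS, Nat.card_Icc]
    congr 1
    omega
  · intro B hB B' hB' hne
    rw [Function.onFun, Finset.disjoint_left]
    rintro p hp hp'
    simp only [Finset.mem_image] at hp hp'
    obtain ⟨A1, -, rfl⟩ := hp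
    obtain ⟨A2, -, he⟩ := hp'
    injection he with he1 he2
    exact hne (he2.symm ▸ rfl)
noncomputable def Nc (n a b i : ℕ) : ℕ := (PiFin n a b i).card

lemma Nc_rec {n a b i : ℕ} (ha : 0 < a) (hab : a + b < n) (hbn : n < 2*b)
    (hi : i ≤ 2*b - n) :
    Nc n a b (i+1) + (n-i-2).choose (b-i) * (b-i).choose a
      = Nc n a b i + (n-i-2).choose (b-i-2) * (b-i-1).choose (a-1) := by
  classical
  have hn : 1 ≤ n := by omega
  have h1 := Finset.card_sdiff_add_card_inter (PiFin n a b i) (PiFin n a b (i+1))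
  have h2 := Finset.card_sdiff_add_card_inter (PiFin n a b (i+1)) (PiFin n a b i)
  rw [sdiff_eq_D1 ha hn i, card_D1 ha hab hbn hi] at h1
  rw [sdiff_eq_D2 ha hn i, card_D2 ha hab hbn hi, Finset.inter_comm] at h2
  unfold Nc
  omega

lemma ratio {n a b i : ℕ} (ha : 0 < a) (hab : a + b < n) (hbn : n < 2*b)
    (hi : i ≤ 2*b - n) :
    ((n-i-2).choose (b-i-2) * (b-i-1).choose (a-1)) * ((n-b)*(n-b-1))
      = ((n-i-2).choose (b-i) * (b-i).choose a) * (a*(b-i-1)) := by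
  set u := n-i-2 with hu
  set m := b-i with hm
  set x := n-b with hx
  set p := u.choose (m-2) with hp
  set q := u.choose (m-1) with hq
  set r := u.choose m with hr
  set s := (m-1).choose (a-1) with hs
  set t := m.choose a with ht
  have hm2 : 2 ≤ m := by omega
  have hxa : a + 1 ≤ x := by omega
  have h1' : p * x = q * (m-1) := by
    have := Nat.choose_succ_right_eq u (m-2)
    have e1 : m - 2 + 1 = m - 1 := by omega
    have e2 : u - (m-2) = x := by omega
    rw [e1, e2] at this
    exact this.symm
  have h2' : q * (x-1) = r * m := by
    have := Nat.choose_succ_right_eq u (m-1)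
    have e1 : m - 1 + 1 = m := by omega
    have e2 : u - (m-1) = x - 1 := by omega
    rw [e1, e2] at this
    exact this.symm
  have h3' : m * s = t * a := by
    have h := Nat.add_one_mul_choose_eq (m-1) (a-1)
    rw [show m-1+1 = m by omega, show a-1+1 = a by omega] at h
    exact h
  have big : (p*s*(x*(x-1))) * (m*(m-1)) = (r*t*(a*(m-1))) * (m*(m-1)) := by
    calc (p*s*(x*(x-1)))*(m*(m-1)) = (p*x)*(m*s)*((x-1)*(m-1)) := by ring
      _ = (q*(m-1))*(t*a)*((x-1)*(m-1)) := by rw [h1', h3']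
      _ = (q*(x-1))*(t*a)*((m-1)*(m-1)) := by ring
      _ = (r*m)*(t*a)*((m-1)*(m-1)) := by rw [h2']
      _ = (r*t*(a*(m-1)))*(m*(m-1)) := by ring
  have hpos : 0 < m*(m-1) := by
    have : 0 < m := by omega
    have : 0 < m - 1 := by omega
    positivity
  have := Nat.eq_of_mul_eq_mul_right hpos big
  calc p*s*(x*(x-1)) = r*t*(a*(m-1)) := this
    _ = r*t*(a*(m-1)) := rfl

lemma d1_pos {n a b i : ℕ} (ha : 0 < a) (hab : a + b < n) (hbn : n < 2*b)
    (hi : i ≤ 2*b - n) :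
    0 < (n-i-2).choose (b-i) * (b-i).choose a := by
  apply Nat.mul_pos
  · exact Nat.choose_pos (by omega)
  · exact Nat.choose_pos (by omega)

lemma step_lt {n a b i : ℕ} (ha : 0 < a) (hab : a + b < n) (hbn : n < 2*b)
    (hi : i ≤ 2*b - n) (hcond : (n-b)*(n-b-1) < a*(b-i-1)) :
    Nc n a b i < Nc n a b (i+1) := by
  have hrec := Nc_rec ha hab hbn hi
  have hrat := ratio ha hab hbn hi
  have hd1 := d1_pos ha hab hbn hi
  have hX : 0 < (n-b)*(n-b-1) := by
    have h1 : 0 < n - b := by omega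
    have h2 : 0 < n - b - 1 := by omega
    positivity
  set d1 := (n-i-2).choose (b-i) * (b-i).choose a
  set d2 := (n-i-2).choose (b-i-2) * (b-i-1).choose (a-1)
  have hd : d1 < d2 := by nlinarith
  omega

lemma step_gt {n a b i : ℕ} (ha : 0 < a) (hab : a + b < n) (hbn : n < 2*b)
    (hi : i ≤ 2*b - n) (hcond : a*(b-i-1) < (n-b)*(n-b-1)) :
    Nc n a b (i+1) < Nc n a b i := by
  have hrec := Nc_rec ha hab hbn hi
  have hrat := ratio ha hab hbn hi
  have hd1 := d1_pos ha hab hbn hi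
  have hX : 0 < (n-b)*(n-b-1) := by
    have h1 : 0 < n - b := by omega
    have h2 : 0 < n - b - 1 := by omega
    positivity
  set d1 := (n-i-2).choose (b-i) * (b-i).choose a
  set d2 := (n-i-2).choose (b-i-2) * (b-i-1).choose (a-1)
  have hd : d2 < d1 := by nlinarith
  omega

lemma step_eq {n a b i : ℕ} (ha : 0 < a) (hab : a + b < n) (hbn : n < 2*b)
    (hi : i ≤ 2*b - n) (hcond : a*(b-i-1) = (n-b)*(n-b-1)) :
    Nc n a b i = Nc n a b (i+1) := by
  have hrec := Nc_rec ha hab hbn hi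
  have hrat := ratio ha hab hbn hi
  have hd1 := d1_pos ha hab hbn hi
  have hX : 0 < (n-b)*(n-b-1) := by
    have h1 : 0 < n - b := by omega
    have h2 : 0 < n - b - 1 := by omega
    positivity
  set d1 := (n-i-2).choose (b-i) * (b-i).choose a
  set d2 := (n-i-2).choose (b-i-2) * (b-i-1).choose (a-1)
  have hd : d2 = d1 := by
    rw [hcond] at hrat
    exact Nat.eq_of_mul_eq_mul_right hX hrat
  omega
lemma izero_cast_key {n a b j : ℕ} (ha : 0 < a) (hab : a + b < n) (hbn : n < 2*b)
    (hj : j + 1 ≤ b) :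
    (a:ℚ) * (izero n a b - j)
      = ((a*(b-j-1) : ℕ) : ℚ) - (((n-b)*(n-b-1) : ℕ) : ℚ) := by
  have haQ : (0:ℚ) < a := by exact_mod_cast ha
  have c1 : ((b - j - 1 : ℕ) : ℚ) = (b:ℚ) - j - 1 := by
    rw [Nat.cast_sub (by omega), Nat.cast_sub (by omega)]
    push_cast; ring
  have c2 : ((n - b - 1 : ℕ) : ℚ) = (n:ℚ) - b - 1 := by
    rw [Nat.cast_sub (by omega), Nat.cast_sub (by omega)]
    push_cast; ring
  have c3 : ((n - b : ℕ) : ℚ) = (n:ℚ) - b := by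
    rw [Nat.cast_sub (by omega)]
  rw [Nat.cast_mul, Nat.cast_mul, c1, c2, c3, izero]
  field_simp
  ring

lemma izero_trichotomy {n a b j : ℕ} (ha : 0 < a) (hab : a + b < n) (hbn : n < 2*b)
    (hj : j + 1 ≤ b) :
    ((j:ℚ) < izero n a b ↔ (n-b)*(n-b-1) < a*(b-j-1)) ∧
    ((j:ℚ) = izero n a b ↔ (n-b)*(n-b-1) = a*(b-j-1)) ∧
    (izero n a b < (j:ℚ) ↔ a*(b-j-1) < (n-b)*(n-b-1)) := by
  have haQ : (0:ℚ) < a := by exact_mod_cast ha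
  have key := izero_cast_key ha hab hbn hj
  refine ⟨⟨fun h => ?_, fun h => ?_⟩, ⟨fun h => ?_, fun h => ?_⟩, ⟨fun h => ?_, fun h => ?_⟩⟩
  · have h2 : (0:ℚ) < a * (izero n a b - j) := by nlinarith
    rw [key] at h2
    have : (((n-b)*(n-b-1) : ℕ) : ℚ) < ((a*(b-j-1) : ℕ) : ℚ) := by linarith
    exact_mod_cast this
  · have h2 : (((n-b)*(n-b-1) : ℕ) : ℚ) < ((a*(b-j-1) : ℕ) : ℚ) := by exact_mod_cast h
    have h3 : (0:ℚ) < a * (izero n a b - j) := by rw [key]; linarith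
    nlinarith
  · have h2 : (0:ℚ) = a * (izero n a b - j) := by rw [← h]; ring
    rw [key] at h2
    have : (((n-b)*(n-b-1) : ℕ) : ℚ) = ((a*(b-j-1) : ℕ) : ℚ) := by linarith
    exact_mod_cast this
  · have h2 : (((n-b)*(n-b-1) : ℕ) : ℚ) = ((a*(b-j-1) : ℕ) : ℚ) := by exact_mod_cast h
    have h3 : (0:ℚ) = a * (izero n a b - j) := by rw [key]; linarith
    have h4 : izero n a b - j = 0 := by
      rcases mul_eq_zero.mp h3.symm with h | h
      · exact absurd h (by positivity)
      · exact h
    linarith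
  · have h2 : a * (izero n a b - j) < 0 := by nlinarith
    rw [key] at h2
    have : ((a*(b-j-1) : ℕ) : ℚ) < (((n-b)*(n-b-1) : ℕ) : ℚ) := by linarith
    exact_mod_cast this
  · have h2 : ((a*(b-j-1) : ℕ) : ℚ) < (((n-b)*(n-b-1) : ℕ) : ℚ) := by exact_mod_cast h
    have h3 : a * (izero n a b - j) < 0 := by rw [key]; linarith
    nlinarith

lemma izero_le {n a b : ℕ} (ha : 0 < a) (hab : a + b < n) (hbn : n < 2*b) :
    izero n a b ≤ 2*(b:ℚ) - n - 1 := by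
  have haQ : (0:ℚ) < a := by exact_mod_cast ha
  have h1 : (a:ℚ) ≤ (n:ℚ) - b - 1 := by
    have : (a:ℚ) ≤ ((n - b - 1 : ℕ) : ℚ) := by
      exact_mod_cast (show a ≤ n - b - 1 by omega)
    rw [Nat.cast_sub (by omega), Nat.cast_sub (by omega)] at this
    push_cast at this
    linarith
  have h2 : (n:ℚ) - b ≤ ((n:ℚ)-b)*((n:ℚ)-b-1)/a := by
    rw [le_div_iff₀ haQ]
    have hnb : (0:ℚ) < (n:ℚ) - b := by
      have : (0:ℚ) < ((n - b : ℕ) : ℚ) := by exact_mod_cast (show 0 < n - b by omega)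
      rw [Nat.cast_sub (by omega)] at this
      linarith
    nlinarith
  rw [izero]
  linarith

lemma chain_up {N : ℕ → ℕ} {lo : ℕ} : ∀ {hi : ℕ}, lo < hi →
    (∀ j, lo ≤ j → j + 1 ≤ hi → N j < N (j+1)) → N lo < N hi := by
  intro hi
  induction hi with
  | zero => omega
  | succ k ih =>
    intro h hstep
    rcases Nat.lt_or_ge lo k with h' | h'
    · exact lt_trans (ih h' (fun j a b => hstep j a (by omega)))
        (hstep k (by omega) le_rfl)
    · have : lo = k := by omega
      subst this
      exact hstep lo le_rfl le_rfl

lemma chain_down {N : ℕ → ℕ} {lo : ℕ} : ∀ {hi : ℕ}, lo < hi →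
    (∀ j, lo ≤ j → j + 1 ≤ hi → N (j+1) < N j) → N hi < N lo := by
  intro hi
  induction hi with
  | zero => omega
  | succ k ih =>
    intro h hstep
    rcases Nat.lt_or_ge lo k with h' | h'
    · exact lt_trans (hstep k (by omega) le_rfl)
        (ih h' (fun j a b => hstep j a (by omega)))
    · have : lo = k := by omega
      subst this
      exact hstep lo le_rfl le_rfl

/-- the index (or indices) `i` maximizing `|F_i(n,a,b)|`, in terms
of the rational number `i₀ = b - 1 - (n-b)(n-b-1)/a`. -/
theorem Fi_card_max (n a b : ℕ) (ha : 0 < a) (hb : 0 < b)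
    (hab : a + b < n) (hbn : n < 2 * b) :
    (izero n a b < 0 →
      ∀ i : ℕ, 1 ≤ i → i ≤ 2 * b - n + 1 →
        (Fi n a b i).ncard < (Fi n a b 0).ncard) ∧
    (∀ m : ℕ, (m : ℚ) = izero n a b →
      (Fi n a b m).ncard = (Fi n a b (m + 1)).ncard ∧
      ∀ i : ℕ, i ≤ 2 * b - n + 1 → i ≠ m → i ≠ m + 1 →
        (Fi n a b i).ncard < (Fi n a b m).ncard) ∧
    (0 ≤ izero n a b → (∀ m : ℤ, (m : ℚ) ≠ izero n a b) →
      ∀ i : ℕ, i ≤ 2 * b - n + 1 → i ≠ (⌈izero n a b⌉).toNat →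
        (Fi n a b i).ncard < (Fi n a b (⌈izero n a b⌉).toNat).ncard) := by
  have hab' : a < b := by omega
  have hbn' : b < n := by omega
  have hNc : ∀ i, (Fi n a b i).ncard = Nc n a b i :=
    fun i => ncard_Fi ha hab' hbn' i
  -- step lemmas in terms of izero
  have hup : ∀ j, j ≤ 2*b - n → (j:ℚ) < izero n a b → Nc n a b j < Nc n a b (j+1) := by
    intro j hj hlt
    exact step_lt ha hab hbn hj
      (((izero_trichotomy ha hab hbn (by omega)).1).mp hlt)
  have hdown : ∀ j, j ≤ 2*b - n → izero n a b < (j:ℚ) → Nc n a b (j+1) < Nc n a b j := by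
    intro j hj hlt
    exact step_gt ha hab hbn hj
      (((izero_trichotomy ha hab hbn (by omega)).2.2).mp hlt)
  have heq : ∀ j, j ≤ 2*b - n → (j:ℚ) = izero n a b → Nc n a b j = Nc n a b (j+1) := by
    intro j hj hlt
    exact step_eq ha hab hbn hj
      (((izero_trichotomy ha hab hbn (by omega)).2.1).mp hlt).symm
  refine ⟨?_, ?_, ?_⟩
  · -- case izero < 0
    intro hneg i hi1 hi2
    rw [hNc, hNc]
    apply chain_down (by omega)
    intro j hj hj1
    apply hdown j (by omega)
    have : (0:ℚ) ≤ j := by positivity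
    linarith
  · -- case izero = m
    intro m hm
    have hmle : m ≤ 2*b - n - 1 := by
      have h1 : (m:ℚ) ≤ 2*(b:ℚ) - n - 1 := hm ▸ izero_le ha hab hbn
      have h2 : (m:ℚ) + n + 1 ≤ 2*b := by linarith
      have h3 : m + n + 1 ≤ 2*b := by exact_mod_cast h2
      omega
    have hNeq : Nc n a b m = Nc n a b (m+1) := heq m (by omega) hm
    constructor
    · rw [hNc, hNc]; exact hNeq
    · intro i hi him him1
      rw [hNc, hNc]
      rcases Nat.lt_or_ge i m with h | h
      · apply chain_up h
        intro j hj hj1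
        apply hup j (by omega)
        rw [← hm]
        exact_mod_cast (show j < m by omega)
      · have h' : m + 1 < i := by omega
        rw [hNeq]
        apply chain_down h'
        intro j hj hj1
        apply hdown j (by omega)
        rw [← hm]
        exact_mod_cast (show m < j by omega)
  · -- case izero ≥ 0 noninteger
    intro hpos hnint i hi hne
    set c := (⌈izero n a b⌉).toNat with hc
    have hceil_pos : 0 < ⌈izero n a b⌉ := by
      rw [Int.ceil_pos]
      rcases lt_or_eq_of_le hpos with h | h
      · exact h
      · exact absurd h.symm (fun hh => hnint 0 (by exact_mod_cast hh.symm))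
    have hcZ : (c:ℤ) = ⌈izero n a b⌉ := Int.toNat_of_nonneg (le_of_lt hceil_pos)
    have hcle : c ≤ 2*b - n - 1 := by
      have h0 : izero n a b ≤ 2*(b:ℚ) - n - 1 := izero_le ha hab hbn
      have h1 : ((2*b - n - 1 : ℕ) : ℚ) = 2*(b:ℚ) - n - 1 := by
        rw [Nat.cast_sub (by omega), Nat.cast_sub (by omega)]
        push_cast; ring
      have h2 : ⌈izero n a b⌉ ≤ ((2*b - n - 1 : ℕ) : ℤ) := by
        rw [Int.ceil_le]
        push_cast
        rw [h1]
        exact h0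
      omega
    have hizc : izero n a b < (c:ℚ) := by
      have h1 : izero n a b ≤ ((⌈izero n a b⌉ : ℤ) : ℚ) := Int.le_ceil _
      have h2 : izero n a b ≠ ((⌈izero n a b⌉ : ℤ) : ℚ) := fun h => hnint _ h.symm
      have h3 : ((c:ℕ):ℚ) = ((⌈izero n a b⌉ : ℤ) : ℚ) := by
        rw [← hcZ]; push_cast; ring
      rw [h3]
      exact lt_of_le_of_ne h1 h2
    have hltc : ∀ j : ℕ, j < c → (j:ℚ) < izero n a b := by
      intro j hj
      have h1 : (j:ℤ) < ⌈izero n a b⌉ := by omega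
      have := Int.lt_ceil.mp h1
      exact_mod_cast this
    rw [hNc, hNc]
    rcases Nat.lt_or_ge i c with h | h
    · apply chain_up h
      intro j hj hj1
      exact hup j (by omega) (hltc j (by omega))
    · have h' : c < i := by omega
      apply chain_down h'
      intro j hj hj1
      apply hdown j (by omega)
      calc izero n a b < (c:ℚ) := hizc
        _ ≤ (j:ℚ) := by exact_mod_cast hj
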